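/- Let a : ℤⁿ × 𝕋^{nr} → ℂ be such that T_a : ℓ^{p₁}(ℤⁿ)×⋯×ℓ^{p_r}(ℤⁿ) → ℓ^{p}(ℤⁿ) is a nuclear multilinear operator. Then the function ℓ = (ℓ₁,…,ℓ_r) ↦ ‖ ∫_{𝕋^{nr}} a(x,ξ) e^{2πi(x̃-ℓ)·ξ} dξ ‖_{ℓ^p(ℤⁿ_x)} belongs to the mixed-norm space ℓ^{p₁'}(ℤⁿ)×⋯×ℓ^{p_r'}(ℤⁿ), where x̃ = (x,…,x) ∈ ℤ^{nr}. -/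

import Mathlib

/-!
Testing the nuclear decomposition `T_a f = ∑ₖ (∏ⱼ ⟨fⱼ, g_{kj}⟩) hₖ` against the point masses
`fⱼ = δ_{ℓⱼ}` identifies `∫ a(x,ξ) e^{2πi(x̃-ℓ)·ξ} dξ` with the kernel `∑ₖ (∏ⱼ g_{kj}(ℓⱼ)) hₖ(x)`.
By the countable Minkowski inequality its `ℓ^p`-norm in `x` is at most
`∑ₖ ‖hₖ‖_p ∏ⱼ |g_{kj}(ℓⱼ)|`, and the mixed norm of each summand is at most
`‖hₖ‖_p ∏ⱼ ‖g_{kj}‖_{p_j'}`, whose sum over `k` is finite by nuclearity.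
-/

open MeasureTheory Real
open scoped ENNReal

/-- The `ℓ^q`-norm (with `q ∈ [1,∞]`) of an `ℝ≥0∞`-valued sequence on `ℤⁿ`. -/
noncomputable def elp (n : ℕ) (q : ℝ≥0∞) (F : (Fin n → ℤ) → ℝ≥0∞) : ℝ≥0∞ :=
  if q = ⊤ then ⨆ x, F x else (∑' x, F x ^ q.toReal) ^ (1 / q.toReal)

/-- The iterated mixed norm `‖⋯‖‖F(·,ℓ₂,…,ℓ_k)‖_{ℓ^{q₁}}‖_{ℓ^{q₂}}⋯‖_{ℓ^{q_k}}`. -/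
noncomputable def mixedNorm (n : ℕ) :
    (k : ℕ) → (Fin k → ℝ≥0∞) → ((Fin k → Fin n → ℤ) → ℝ≥0∞) → ℝ≥0∞
  | 0, _, F => F Fin.elim0
  | (k + 1), q, F => mixedNorm n k (fun i => q i.succ)
      (fun ℓ => elp n (q 0) fun z => F (Fin.cons z ℓ))

namespace MeasureTheory

variable {α : Type*} [MeasurableSpace α] {μ : Measure α} {p : ℝ≥0∞}

lemma eLpNorm_iSup_le_of_monotone {G : ℕ → α → ℝ≥0∞} (hG : ∀ N, AEMeasurable (G N) μ)
    (hmono : Monotone G) :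
    eLpNorm (fun x => ⨆ N, G N x) p μ ≤ ⨆ N, eLpNorm (G N) p μ := by
  rcases eq_or_ne p 0 with rfl | hp0
  · simp
  rcases eq_or_ne p ⊤ with rfl | hptop
  · simp only [eLpNorm_exponent_top]
    refine eLpNormEssSup_le_of_ae_enorm_bound ?_
    filter_upwards [ae_all_iff.2 fun N => ae_le_eLpNormEssSup (f := G N) (μ := μ)] with x hx
    exact iSup_mono hx
  have ht : 0 < p.toReal := ENNReal.toReal_pos hp0 hptop
  simp only [eLpNorm_eq_lintegral_rpow_enorm_toReal hp0 hptop, enorm_eq_self]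
  have hrpow : ∀ x, (⨆ N, G N x) ^ p.toReal = ⨆ N, G N x ^ p.toReal := fun x => by
    simpa only [ENNReal.orderIsoRpow_apply] using
      (ENNReal.orderIsoRpow p.toReal ht).map_iSup (G · x)
  have hinv := (ENNReal.orderIsoRpow (1 / p.toReal) (by positivity)).map_iSup
    (fun N => ∫⁻ x, G N x ^ p.toReal ∂μ)
  simp only [ENNReal.orderIsoRpow_apply] at hinv
  rw [← hinv, lintegral_congr hrpow,
    lintegral_iSup' (fun N => (hG N).pow_const _)
      (Filter.Eventually.of_forall fun x N M hNM => ENNReal.rpow_le_rpow (hmono hNM x) ht.le)]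

lemma eLpNorm_tsum_le {F : ℕ → α → ℝ≥0∞} (hF : ∀ k, AEMeasurable (F k) μ) (hp : 1 ≤ p) :
    eLpNorm (fun x => ∑' k, F k x) p μ ≤ ∑' k, eLpNorm (F k) p μ := by
  simp_rw [ENNReal.tsum_eq_iSup_nat]
  have hmono : Monotone fun N x => ∑ k ∈ Finset.range N, F k x :=
    fun N M hNM x => Finset.sum_le_sum_of_subset (Finset.range_mono hNM)
  refine (eLpNorm_iSup_le_of_monotone
    (fun N => Finset.aemeasurable_fun_sum _ fun k _ => hF k) hmono).trans
    (iSup_mono fun N => ?_)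
  rw [← Finset.sum_fn]
  exact eLpNorm_sum_le (fun k _ => (hF k).aestronglyMeasurable) hp

lemma eLpNorm_tsum_smul_le {𝕜 E : Type*} [NormedField 𝕜] [NormedAddCommGroup E]
    [NormedSpace 𝕜 E] {c : ℕ → 𝕜} {f : ℕ → α → E} (hf : ∀ k, AEStronglyMeasurable (f k) μ)
    (hp : 1 ≤ p) :
    eLpNorm (fun x => ∑' k, c k • f k x) p μ ≤ ∑' k, ‖c k‖ₑ * eLpNorm (f k) p μ :=
  calc eLpNorm (fun x => ∑' k, c k • f k x) p μ
      ≤ eLpNorm (fun x => ∑' k, ‖c k‖ₑ * ‖f k x‖ₑ) p μ :=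
        eLpNorm_mono_enorm fun x => by
          simpa only [enorm_eq_self, enorm_smul] using
            enorm_tsum_le_tsum_enorm (f := fun k => c k • f k x)
    _ ≤ ∑' k, eLpNorm (fun x => ‖c k‖ₑ * ‖f k x‖ₑ) p μ :=
        eLpNorm_tsum_le (fun k => (hf k).enorm.const_mul _) hp
    _ ≤ ∑' k, ‖c k‖ₑ * eLpNorm (f k) p μ :=
        ENNReal.tsum_le_tsum fun k => eLpNorm_le_mul_eLpNorm_of_ae_le_mul'' p (hf k)
          (Filter.Eventually.of_forall fun x => by rw [enorm_eq_self])

end MeasureTheory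

section MixedNorm

variable {n : ℕ}

lemma elp_eq_eLpNorm {q : ℝ≥0∞} (hq : q ≠ 0) (F : (Fin n → ℤ) → ℝ≥0∞) :
    elp n q F = eLpNorm F q Measure.count := by
  unfold elp
  split_ifs with htop
  · rw [htop, eLpNorm_exponent_top, eLpNormEssSup_eq_iSup (by simp)]
    simp only [enorm_eq_self]
  · rw [eLpNorm_eq_lintegral_rpow_enorm_toReal hq htop, lintegral_count]
    simp only [enorm_eq_self]

lemma elp_mono {q : ℝ≥0∞} {F G : (Fin n → ℤ) → ℝ≥0∞} (h : ∀ x, F x ≤ G x) :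
    elp n q F ≤ elp n q G := by
  unfold elp
  split
  · exact iSup_mono h
  · exact ENNReal.rpow_le_rpow (ENNReal.tsum_le_tsum fun x =>
      ENNReal.rpow_le_rpow (h x) ENNReal.toReal_nonneg) (by positivity)

lemma elp_const_mul_le {q : ℝ≥0∞} (hq : q ≠ 0) (c : ℝ≥0∞) (F : (Fin n → ℤ) → ℝ≥0∞) :
    elp n q (fun x => c * F x) ≤ c * elp n q F := by
  rw [elp_eq_eLpNorm hq, elp_eq_eLpNorm hq]
  exact eLpNorm_le_mul_eLpNorm_of_ae_le_mul'' q
    (measurable_of_countable F).aestronglyMeasurable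
    (Filter.Eventually.of_forall fun x => by simp only [enorm_eq_self, le_refl])

lemma elp_tsum_le {q : ℝ≥0∞} (hq : 1 ≤ q) (F : ℕ → (Fin n → ℤ) → ℝ≥0∞) :
    elp n q (fun x => ∑' m, F m x) ≤ ∑' m, elp n q (F m) := by
  have hq0 : q ≠ 0 := (zero_lt_one.trans_le hq).ne'
  simp only [elp_eq_eLpNorm hq0]
  exact eLpNorm_tsum_le (fun m => (measurable_of_countable _).aemeasurable) hq

lemma mixedNorm_mono {k : ℕ} {q : Fin k → ℝ≥0∞} {F G : (Fin k → Fin n → ℤ) → ℝ≥0∞}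
    (h : ∀ ℓ, F ℓ ≤ G ℓ) : mixedNorm n k q F ≤ mixedNorm n k q G := by
  induction k with
  | zero => exact h _
  | succ k ih => exact ih fun ℓ => elp_mono fun z => h _

lemma mixedNorm_tsum_le {k : ℕ} {q : Fin k → ℝ≥0∞} (hq : ∀ i, 1 ≤ q i)
    (F : ℕ → (Fin k → Fin n → ℤ) → ℝ≥0∞) :
    mixedNorm n k q (fun ℓ => ∑' m, F m ℓ) ≤ ∑' m, mixedNorm n k q (F m) := by
  induction k with
  | zero => exact le_rfl
  | succ k ih =>
    exact (mixedNorm_mono fun ℓ => elp_tsum_le (hq 0) _).trans (ih (fun i => hq i.succ) _)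

lemma mixedNorm_const_mul_prod_le {k : ℕ} {q : Fin k → ℝ≥0∞} (hq : ∀ i, q i ≠ 0) (c : ℝ≥0∞)
    (φ : Fin k → (Fin n → ℤ) → ℝ≥0∞) :
    mixedNorm n k q (fun ℓ => c * ∏ j, φ j (ℓ j)) ≤ c * ∏ j, elp n (q j) (φ j) := by
  induction k generalizing c with
  | zero => simp [mixedNorm]
  | succ k ih =>
    have hsplit : ∀ ℓ : Fin k → Fin n → ℤ, (fun z => c * ∏ j, φ j (Fin.cons z ℓ j)) =
        fun z => (c * ∏ j : Fin k, φ j.succ (ℓ j)) * φ 0 z := fun ℓ => by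
      ext z
      simp only [Fin.prod_univ_succ, Fin.cons_zero, Fin.cons_succ]
      ring
    calc mixedNorm n (k + 1) q (fun ℓ => c * ∏ j, φ j (ℓ j))
        ≤ mixedNorm n k (fun i => q i.succ)
            (fun ℓ => (c * elp n (q 0) (φ 0)) * ∏ j : Fin k, φ j.succ (ℓ j)) := by
          refine mixedNorm_mono fun ℓ => ?_
          rw [hsplit ℓ]
          refine (elp_const_mul_le (hq 0) _ _).trans_eq ?_
          ring
      _ ≤ c * elp n (q 0) (φ 0) * ∏ j : Fin k, elp n (q j.succ) (φ j.succ) :=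
          ih (fun i => hq i.succ) _ _
      _ = c * ∏ j, elp n (q j) (φ j) := by rw [Fin.prod_univ_succ, mul_assoc]

end MixedNorm

open Complex in
lemma cexp_phase_mul_prod_cexp_neg_phase {n r : ℕ} (x : Fin n → ℤ) (ℓ : Fin r → Fin n → ℤ)
    (η : Fin r → Fin n → ℝ) (c : ℂ) :
    exp (2 * π * I * ((∑ j, ∑ i, (x i : ℝ) * η j i : ℝ) : ℂ)) * c *
        ∏ j, exp (-2 * π * I * ((∑ i, (ℓ j i : ℝ) * η j i : ℝ) : ℂ))
      = c * exp (2 * π * I * ((∑ j, ∑ i, ((x i - ℓ j i : ℤ) : ℝ) * η j i : ℝ) : ℂ)) := by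
  rw [← Complex.exp_sum, mul_comm _ c, mul_assoc, ← Complex.exp_add]
  congr 2
  push_cast
  simp only [Finset.mul_sum, ← Finset.sum_add_distrib]
  refine Finset.sum_congr rfl fun j _ => Finset.sum_congr rfl fun i _ => ?_
  ring

theorem statement9_general (n r : ℕ)
    (p : ℝ≥0∞) (pj qj : Fin r → ℝ≥0∞)
    (hp : 1 ≤ p ∧ p < ⊤)
    (hq : ∀ j, 1 / pj j + 1 / qj j = 1)
    (a : (Fin n → ℤ) → (Fin r → Fin n → ℝ) → ℂ)
    -- `T_a` is nuclear:
    (hnuc : ∃ (h : ℕ → (Fin n → ℤ) → ℂ) (g : ℕ → Fin r → (Fin n → ℤ) → ℂ),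
        (∀ k, MemLp (h k) p Measure.count) ∧
        (∀ k j, MemLp (g k j) (qj j) Measure.count) ∧
        (∑' k, eLpNorm (h k) p Measure.count *
            ∏ j, eLpNorm (g k j) (qj j) Measure.count ≠ ⊤) ∧
        ∀ f : Fin r → (Fin n → ℤ) → ℂ, (∀ j, MemLp (f j) (pj j) Measure.count) →
          ∀ x : Fin n → ℤ,
            (∫ η in Set.univ.pi fun _ : Fin r => Set.univ.pi fun _ : Fin n => Set.Ico (0:ℝ) 1,
                Complex.exp (2 * (π : ℂ) * Complex.I *
                  ((∑ j, ∑ i, (x i : ℝ) * η j i : ℝ) : ℂ)) * a x η *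
                ∏ j, ∑' k : Fin n → ℤ,
                  Complex.exp (-2 * (π : ℂ) * Complex.I *
                    ((∑ i, (k i : ℝ) * η j i : ℝ) : ℂ)) * f j k)
              = ∑' k, (∏ j, ∑' y : Fin n → ℤ, f j y * g k j y) * h k x) :
    mixedNorm n r qj (fun ℓ : Fin r → Fin n → ℤ =>
      eLpNorm (fun x : Fin n → ℤ =>
        ∫ ξ in Set.univ.pi fun _ : Fin r => Set.univ.pi fun _ : Fin n => Set.Ico (0:ℝ) 1,
          a x ξ * Complex.exp (2 * (π : ℂ) * Complex.I *
            ((∑ j, ∑ i, ((x i - ℓ j i : ℤ) : ℝ) * ξ j i : ℝ) : ℂ)))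
        p Measure.count) ≠ ⊤ := by
  obtain ⟨h, g, hh, -, hsum, hker⟩ := hnuc
  have hqj : ∀ j, 1 ≤ qj j := fun j =>
    have : ENNReal.HolderConjugate (pj j) (qj j) :=
      ENNReal.holderConjugate_iff.2 (by simpa only [one_div] using hq j)
    ENNReal.HolderConjugate.one_le (qj j) (pj j)
  have hqj0 : ∀ j, qj j ≠ 0 := fun j => (zero_lt_one.trans_le (hqj j)).ne'
  have hkernel : ∀ (ℓ : Fin r → Fin n → ℤ) (x : Fin n → ℤ),
      (∫ ξ in Set.univ.pi fun _ : Fin r => Set.univ.pi fun _ : Fin n => Set.Ico (0:ℝ) 1,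
        a x ξ * Complex.exp (2 * (π : ℂ) * Complex.I *
          ((∑ j, ∑ i, ((x i - ℓ j i : ℤ) : ℝ) * ξ j i : ℝ) : ℂ)))
      = ∑' k, (∏ j, g k j (ℓ j)) • h k x := fun ℓ x => by
    have := hker (fun j => ({ℓ j} : Set (Fin n → ℤ)).indicator fun _ => 1)
      (fun j => memLp_indicator_const _ (measurableSet_singleton _) _ (Or.inr (by simp))) x
    simpa only [Set.indicator_apply, Set.mem_singleton_iff, mul_ite, ite_mul, mul_one, one_mul,
      mul_zero, zero_mul, tsum_ite_eq, cexp_phase_mul_prod_cexp_neg_phase, smul_eq_mul] using this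
  refine ne_top_of_le_ne_top hsum ?_
  simp_rw [hkernel]
  calc _ ≤ mixedNorm n r qj
          (fun ℓ => ∑' k, eLpNorm (h k) p Measure.count * ∏ j, ‖g k j (ℓ j)‖ₑ) :=
        mixedNorm_mono fun ℓ => (eLpNorm_tsum_smul_le (fun k => (hh k).1) hp.1).trans_eq
          (tsum_congr fun k => by simp [enorm_eq_nnnorm, mul_comm])
    _ ≤ ∑' k, eLpNorm (h k) p Measure.count * ∏ j, eLpNorm (g k j) (qj j) Measure.count := by
        refine (mixedNorm_tsum_le hqj _).trans (ENNReal.tsum_le_tsum fun k => ?_)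
        refine (mixedNorm_const_mul_prod_le hqj0 _ fun j y => ‖g k j y‖ₑ).trans_eq ?_
        simp only [elp_eq_eLpNorm (hqj0 _), eLpNorm_enorm]

/-- If `T_a` is nuclear then `ℓ ↦ ‖∫_{𝕋^{nr}} a(x,ξ)e^{2πi(x̃-ℓ)·ξ}dξ‖_{ℓ^p(ℤⁿ_x)}`
belongs to the mixed-norm space `ℓ^{p₁'}×⋯×ℓ^{p_r'}`. -/
theorem statement9 (n r : ℕ) (hn : 1 ≤ n) (hr : 1 ≤ r)
    (p : ℝ≥0∞) (pj qj : Fin r → ℝ≥0∞)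
    (hp : 1 ≤ p ∧ p < ⊤) (hpj : ∀ j, 1 ≤ pj j ∧ pj j < ⊤)
    (hq : ∀ j, 1 / pj j + 1 / qj j = 1)
    (a : (Fin n → ℤ) → (Fin r → Fin n → ℝ) → ℂ)
    -- `T_a` is nuclear:
    (hnuc : ∃ (h : ℕ → (Fin n → ℤ) → ℂ) (g : ℕ → Fin r → (Fin n → ℤ) → ℂ),
        (∀ k, MemLp (h k) p Measure.count) ∧
        (∀ k j, MemLp (g k j) (qj j) Measure.count) ∧
        (∑' k, eLpNorm (h k) p Measure.count *
            ∏ j, eLpNorm (g k j) (qj j) Measure.count ≠ ⊤) ∧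
        ∀ f : Fin r → (Fin n → ℤ) → ℂ, (∀ j, MemLp (f j) (pj j) Measure.count) →
          ∀ x : Fin n → ℤ,
            (∫ η in Set.univ.pi fun _ : Fin r => Set.univ.pi fun _ : Fin n => Set.Ico (0:ℝ) 1,
                Complex.exp (2 * (π : ℂ) * Complex.I *
                  ((∑ j, ∑ i, (x i : ℝ) * η j i : ℝ) : ℂ)) * a x η *
                ∏ j, ∑' k : Fin n → ℤ,
                  Complex.exp (-2 * (π : ℂ) * Complex.I *
                    ((∑ i, (k i : ℝ) * η j i : ℝ) : ℂ)) * f j k)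
              = ∑' k, (∏ j, ∑' y : Fin n → ℤ, f j y * g k j y) * h k x) :
    mixedNorm n r qj (fun ℓ : Fin r → Fin n → ℤ =>
      eLpNorm (fun x : Fin n → ℤ =>
        ∫ ξ in Set.univ.pi fun _ : Fin r => Set.univ.pi fun _ : Fin n => Set.Ico (0:ℝ) 1,
          a x ξ * Complex.exp (2 * (π : ℂ) * Complex.I *
            ((∑ j, ∑ i, ((x i - ℓ j i : ℤ) : ℝ) * ξ j i : ℝ) : ℂ)))
        p Measure.count) ≠ ⊤ :=
  statement9_general n r p pj qj hp hq a hnuc
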